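/- Let V and W be reflexive Banach spaces and B : W × V → ℝ a bounded bilinear form whose inf-sup constant inf_{w≠0} sup_{v≠0} B(w,v)/(‖w‖‖v‖) is positive and whose associated operator is boundedly invertible. Then inf_{w≠0} sup_{v≠0} B(w,v)/(‖w‖‖v‖) = inf_{v≠0} sup_{w≠0} B(w,v)/(‖w‖‖v‖); i.e., the inf-sup constant is unchanged when the roles of trial and test spaces are interchanged. -/

import Mathlib

/-!
Both inf-sup constants are minimum moduli: since `sup_{v ≠ 0} g v / ‖v‖ = ‖g‖` for a real
functional `g`, the left side is the minimum modulus of `B : W → V*` and the right side that of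
`Bᵀ : V → W*`. If `B` is onto `V*` and `c ‖w‖ ≤ ‖B w‖` for all `w`, then for each `v`
a norming functional `g` with `g v = ‖v‖`, `‖g‖ ≤ 1` is `B w` for some `w` with `c ‖w‖ ≤ 1`,
so `c ‖v‖ = B w v ≤ ‖Bᵀ v‖ ‖w‖` gives `c ‖v‖ ≤ ‖Bᵀ v‖`. This yields one inequality; the other is
the same argument for `Bᵀ`, which is onto `W*` because `V` is reflexive and `B` is an isomorphism.
-/

open NormedSpace

namespace ContinuousLinearMap

variable {E F : Type*} [NormedAddCommGroup E] [NormedSpace ℝ E]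
  [NormedAddCommGroup F] [NormedSpace ℝ F]

theorem iSup_apply_div_norm (g : StrongDual ℝ E) :
    ⨆ x : {x : E // x ≠ 0}, g x.1 / ‖x.1‖ = ‖g‖ := by
  rcases subsingleton_or_nontrivial E with hE | hE
  · have : IsEmpty {x : E // x ≠ 0} := ⟨fun x => x.2 (Subsingleton.elim _ _)⟩
    rw [Real.iSup_of_isEmpty, Subsingleton.elim g 0, norm_zero]
  obtain ⟨x₀, hx₀⟩ := exists_ne (0 : E)
  have : Nonempty {x : E // x ≠ 0} := ⟨⟨x₀, hx₀⟩⟩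
  have hle : ∀ x : {x : E // x ≠ 0}, g x.1 / ‖x.1‖ ≤ ‖g‖ := fun x =>
    div_le_of_le_mul₀ (norm_nonneg _) (norm_nonneg _) ((le_abs_self _).trans (g.le_opNorm x.1))
  refine le_antisymm (ciSup_le hle) ?_
  set S := ⨆ x : {x : E // x ≠ 0}, g x.1 / ‖x.1‖
  have hS : ∀ x : E, g x ≤ S * ‖x‖ := by
    intro x
    rcases eq_or_ne x 0 with rfl | hx
    · simp
    rw [← div_le_iff₀ (norm_pos_iff.mpr hx)]
    exact le_ciSup ⟨‖g‖, Set.forall_mem_range.mpr hle⟩ (⟨x, hx⟩ : {x : E // x ≠ 0})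
  have hS₀ : 0 ≤ S := by
    have h := hS (-x₀)
    rw [map_neg, norm_neg] at h
    nlinarith [hS x₀, norm_pos_iff.mpr hx₀]
  refine g.opNorm_le_bound hS₀ fun x => abs_le.mpr ⟨?_, hS x⟩
  simpa [neg_le] using hS (-x)

theorem iSup_apply_div_mul_norm (g : StrongDual ℝ E) {c : ℝ} (hc : 0 ≤ c) :
    ⨆ x : {x : E // x ≠ 0}, g x.1 / (c * ‖x.1‖) = ‖g‖ / c := by
  simp_rw [div_eq_mul_inv ‖g‖, ← iSup_apply_div_norm g,
    Real.iSup_mul_of_nonneg (inv_nonneg.mpr hc), mul_comm c, ← div_div, div_eq_mul_inv _ c]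

/-- `0` when `E` is trivial, the infimum being over an empty type. -/
noncomputable def minimumModulus (T : E →L[ℝ] F) : ℝ :=
  ⨅ x : {x : E // x ≠ 0}, ‖T x.1‖ / ‖x.1‖

theorem minimumModulus_nonneg (T : E →L[ℝ] F) : 0 ≤ minimumModulus T :=
  Real.iInf_nonneg fun _ => by positivity

@[simp]
theorem minimumModulus_zero : minimumModulus (0 : E →L[ℝ] F) = 0 := by
  simp [minimumModulus]

theorem minimumModulus_mul_norm_le (T : E →L[ℝ] F) (x : E) :
    minimumModulus T * ‖x‖ ≤ ‖T x‖ := by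
  rcases eq_or_ne x 0 with rfl | hx
  · simp
  rw [← le_div_iff₀ (norm_pos_iff.mpr hx), minimumModulus]
  exact ciInf_le ⟨0, Set.forall_mem_range.mpr fun _ => by positivity⟩ (⟨x, hx⟩ : {x : E // x ≠ 0})

theorem le_minimumModulus [Nontrivial E] {T : E →L[ℝ] F} {c : ℝ}
    (h : ∀ x, c * ‖x‖ ≤ ‖T x‖) : c ≤ minimumModulus T := by
  obtain ⟨x₀, hx₀⟩ := exists_ne (0 : E)
  have : Nonempty {x : E // x ≠ 0} := ⟨⟨x₀, hx₀⟩⟩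
  exact le_ciInf fun x => (le_div_iff₀ (norm_pos_iff.mpr x.2)).mpr (h x)

theorem mul_norm_le_norm_flip_apply {B : E →L[ℝ] StrongDual ℝ F}
    (hB : Function.Surjective B) {c : ℝ} (hc : 0 ≤ c) (h : ∀ x, c * ‖x‖ ≤ ‖B x‖) (y : F) :
    c * ‖y‖ ≤ ‖B.flip y‖ := by
  obtain ⟨g, hg, hgy⟩ := exists_dual_vector'' ℝ y
  obtain ⟨x, rfl⟩ := hB g
  have hx : c * ‖x‖ ≤ 1 := (h x).trans hg
  calc c * ‖y‖ = c * B x y := by rw [hgy]; rfl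
    _ ≤ c * (‖B.flip y‖ * ‖x‖) :=
        mul_le_mul_of_nonneg_left ((le_abs_self _).trans ((B.flip y).le_opNorm x)) hc
    _ = ‖B.flip y‖ * (c * ‖x‖) := by ring
    _ ≤ ‖B.flip y‖ := mul_le_of_le_one_right (norm_nonneg _) hx

theorem minimumModulus_le_minimumModulus_flip {B : E →L[ℝ] StrongDual ℝ F}
    (hB : Function.Surjective B) : minimumModulus B ≤ minimumModulus B.flip := by
  rcases subsingleton_or_nontrivial F with hF | hF
  · rw [Subsingleton.elim B 0, minimumModulus_zero]
    exact minimumModulus_nonneg _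
  exact le_minimumModulus <| mul_norm_le_norm_flip_apply hB (minimumModulus_nonneg B)
    (minimumModulus_mul_norm_le B)

theorem flip_surjective_of_surjective_inclusionInDoubleDual (e : E ≃L[ℝ] StrongDual ℝ F)
    (hF : Function.Surjective (inclusionInDoubleDual ℝ F)) :
    Function.Surjective (e : E →L[ℝ] StrongDual ℝ F).flip := by
  intro g
  obtain ⟨y, hy⟩ := hF (g.comp (e.symm : StrongDual ℝ F →L[ℝ] E))
  refine ⟨y, ext fun x => ?_⟩
  simpa using congrArg (fun φ : StrongDual ℝ (StrongDual ℝ F) => φ (e x)) hy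

end ContinuousLinearMap

open ContinuousLinearMap in
theorem stmt1_general
    {W V : Type*} [NormedAddCommGroup W] [NormedSpace ℝ W]
    [NormedAddCommGroup V] [NormedSpace ℝ V]
    (hreflV : Function.Surjective (inclusionInDoubleDual ℝ V))
    (B : W →L[ℝ] V →L[ℝ] ℝ)
    (hiso : ∃ e : W ≃L[ℝ] StrongDual ℝ V, (e : W → StrongDual ℝ V) = fun w => B w) :
    (⨅ w : {w : W // w ≠ 0}, ⨆ v : {v : V // v ≠ 0},
        B w.1 v.1 / (‖w.1‖ * ‖v.1‖)) =
      ⨅ v : {v : V // v ≠ 0}, ⨆ w : {w : W // w ≠ 0},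
        B w.1 v.1 / (‖w.1‖ * ‖v.1‖) := by
  have hleft : ∀ w : W, ⨆ v : {v : V // v ≠ 0}, B w v.1 / (‖w‖ * ‖v.1‖) = ‖B w‖ / ‖w‖ :=
    fun w => iSup_apply_div_mul_norm (B w) (norm_nonneg w)
  have hright : ∀ v : V, ⨆ w : {w : W // w ≠ 0}, B w.1 v / (‖w.1‖ * ‖v‖) = ‖B.flip v‖ / ‖v‖ :=
    fun v => by
      simpa only [mul_comm ‖v‖, flip_apply] using iSup_apply_div_mul_norm (B.flip v) (norm_nonneg v)
  simp_rw [hleft, hright]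
  change minimumModulus B = minimumModulus B.flip
  obtain ⟨e, he⟩ := hiso
  obtain rfl : (e : W →L[ℝ] StrongDual ℝ V) = B := ext fun w => congrFun he w
  refine le_antisymm (minimumModulus_le_minimumModulus_flip e.surjective) ?_
  simpa only [ContinuousLinearMap.flip_flip] using minimumModulus_le_minimumModulus_flip
    (flip_surjective_of_surjective_inclusionInDoubleDual e hreflV)

/-- If `V`, `W` are reflexive Banach spaces and `B` is a bounded bilinear form
satisfying (BNB1) and (BNB2) (so the associated operator is an isomorphism),
then the inf-sup constant is unchanged when the roles of the trial and test
spaces are interchanged. -/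
theorem stmt1
    {W V : Type*} [NormedAddCommGroup W] [NormedSpace ℝ W] [CompleteSpace W]
    [NormedAddCommGroup V] [NormedSpace ℝ V] [CompleteSpace V]
    (hreflW : Function.Surjective (inclusionInDoubleDual ℝ W))
    (hreflV : Function.Surjective (inclusionInDoubleDual ℝ V))
    (B : W →L[ℝ] V →L[ℝ] ℝ)
    (hBNB1 : 0 < ⨅ w : {w : W // w ≠ 0}, ⨆ v : {v : V // v ≠ 0},
        B w.1 v.1 / (‖w.1‖ * ‖v.1‖))
    (hBNB2 : ∀ v : V, v ≠ 0 → ∃ w : W, 0 < B w v)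
    (hiso : ∃ e : W ≃L[ℝ] StrongDual ℝ V, (e : W → StrongDual ℝ V) = fun w => B w) :
    (⨅ w : {w : W // w ≠ 0}, ⨆ v : {v : V // v ≠ 0},
        B w.1 v.1 / (‖w.1‖ * ‖v.1‖)) =
      ⨅ v : {v : V // v ≠ 0}, ⨆ w : {w : W // w ≠ 0},
        B w.1 v.1 / (‖w.1‖ * ‖v.1‖) :=
  stmt1_general hreflV B hiso
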